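/- (Bad rankings can be quadratic) For every n ≥ 2 there exists a set of n unit squares with pairwise distinct centers in ℝ² and a ranking ρ of these squares such that the visibility graph G(ρ) has at least ⌊n/2⌋ · ⌈n/2⌉ edges. -/

import Mathlib

/-!
Split the `n` squares into a first block of `⌊n/2⌋` squares with centers `(-x, 1)` and a second
block of `⌈n/2⌉` squares with centers `(1, y)`, where `x` increases and `y` increases with the
rank, both staying in `[0, 1)`. For a square `(-x, 1)` of the first block and a square `(1, y)`
of the second, the corner `(1 - x, 1 + y)` lies on the right edge of the first and on the top
edge of the second. Every later square of the first block lies strictly to its left, and every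
earlier square of the second block strictly below it, so every such pair sees each other.
-/

/-- The unit square with center `c`: the closed ℓ∞-ball of radius 1
(the product metric on `ℝ × ℝ` is the sup metric). -/
def UnitSq (c : ℝ × ℝ) : Set (ℝ × ℝ) := Metric.closedBall c 1

/-- Strict lexicographic order on `ℝ × ℝ`. -/
def LexLt (a b : ℝ × ℝ) : Prop := a.1 < b.1 ∨ (a.1 = b.1 ∧ a.2 < b.2)

/-- `p` lies in the axis-parallel rectangle spanned by `a` and `b`. -/
def InRect (p a b : ℝ × ℝ) : Prop :=
  min a.1 b.1 ≤ p.1 ∧ p.1 ≤ max a.1 b.1 ∧ min a.2 b.2 ≤ p.2 ∧ p.2 ≤ max a.2 b.2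

/-- In the ranking given by the sequence of centers `c`, square `i` sees square `k`:
some point of `S(c i) ∩ S(c k)` avoids all squares ranked strictly between them. -/
def Sees {n : ℕ} (c : Fin n → ℝ × ℝ) (i k : Fin n) : Prop :=
  ∃ p ∈ UnitSq (c i) ∩ UnitSq (c k), ∀ j : Fin n, i < j → j < k → p ∉ UnitSq (c j)

open Function

lemma mem_unitSq {p c : ℝ × ℝ} : p ∈ UnitSq c ↔ |p.1 - c.1| ≤ 1 ∧ |p.2 - c.2| ≤ 1 := by
  simp [UnitSq, Metric.mem_closedBall, Prod.dist_eq, Real.dist_eq]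

section Corner

variable {x y : ℝ}

lemma corner_mem_unitSq_left (hy : |y| ≤ 1) : (1 - x, 1 + y) ∈ UnitSq (-x, 1) := by
  simp [mem_unitSq, hy]

lemma corner_mem_unitSq_right (hx : |x| ≤ 1) : (1 - x, 1 + y) ∈ UnitSq (1, y) := by
  simp [mem_unitSq, hx]

lemma corner_notMem_unitSq_left {x' : ℝ} (h : x < x') : (1 - x, 1 + y) ∉ UnitSq (-x', 1) := by
  rw [mem_unitSq, abs_le, abs_le]
  intro hp
  linarith [hp.1.2]

lemma corner_notMem_unitSq_right {y' : ℝ} (h : y' < y) : (1 - x, 1 + y) ∉ UnitSq (1, y') := by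
  rw [mem_unitSq, abs_le, abs_le]
  intro hp
  linarith [hp.2.2]

end Corner

noncomputable def cornerCenters (m r : ℕ) : Fin (m + r) → ℝ × ℝ :=
  Fin.append (fun i : Fin m => (-((i : ℝ) / m), 1)) (fun k : Fin r => (1, (k : ℝ) / r))

lemma abs_val_div_le_one {m : ℕ} (i : Fin m) : |(i : ℝ) / m| ≤ 1 := by
  have hm : (0 : ℝ) < m := by exact_mod_cast i.pos
  rw [abs_of_nonneg (by positivity), div_le_one hm]
  exact_mod_cast i.isLt.le

lemma strictMono_val_div (m : ℕ) : StrictMono fun i : Fin m => (i : ℝ) / m := by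
  intro i j hij
  have hm : (0 : ℝ) < m := by exact_mod_cast j.pos
  exact div_lt_div_of_pos_right (by exact_mod_cast hij) hm

lemma injective_cornerCenters (m r : ℕ) : Injective (cornerCenters m r) := by
  refine Fin.append_injective_iff.mpr ⟨?_, ?_, ?_⟩
  · intro i j h
    exact (strictMono_val_div m).injective (neg_injective (congrArg Prod.fst h))
  · intro i j h
    exact (strictMono_val_div r).injective (congrArg Prod.snd h)
  · intro i k h
    have hx : -((i : ℝ) / m) = 1 := congrArg Prod.fst h
    have : (0 : ℝ) ≤ (i : ℝ) / m := by positivity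
    linarith

lemma sees_cornerCenters {m r : ℕ} (i : Fin m) (k : Fin r) :
    Sees (cornerCenters m r) (Fin.castAdd r i) (Fin.natAdd m k) := by
  refine ⟨(1 - (i : ℝ) / m, 1 + (k : ℝ) / r), ⟨?_, ?_⟩, ?_⟩
  · simpa [cornerCenters] using corner_mem_unitSq_left (abs_val_div_le_one k)
  · simpa [cornerCenters] using corner_mem_unitSq_right (abs_val_div_le_one i)
  · intro j
    refine Fin.addCases (fun j hij _ => ?_) (fun j _ hjk => ?_) j
    · simpa [cornerCenters] using
        corner_notMem_unitSq_left (strictMono_val_div m hij)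
    · simpa [cornerCenters] using
        corner_notMem_unitSq_right (strictMono_val_div r ((Fin.natAdd_lt_natAdd_iff m).mp hjk))

lemma mul_le_ncard_of_castAdd_natAdd_mem {m r : ℕ} {S : Set (Fin (m + r) × Fin (m + r))}
    (h : ∀ (i : Fin m) (k : Fin r), (Fin.castAdd r i, Fin.natAdd m k) ∈ S) :
    m * r ≤ S.ncard := by
  let g : Fin m × Fin r → Fin (m + r) × Fin (m + r) :=
    fun q => (Fin.castAdd r q.1, Fin.natAdd m q.2)
  have hg : Injective g := fun a b hab =>
    Prod.ext (Fin.castAdd_injective _ _ (congrArg Prod.fst hab))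
      (Fin.natAdd_injective _ _ (congrArg Prod.snd hab))
  calc m * r = (Set.range g).ncard := by simp [Set.ncard_range_of_injective hg]
    _ ≤ S.ncard := Set.ncard_le_ncard (Set.range_subset_iff.mpr fun q => h q.1 q.2)

theorem stmt_13_general {n : ℕ} :
    ∃ c : Fin n → ℝ × ℝ, Function.Injective c ∧
      (n / 2) * ((n + 1) / 2) ≤
        {p : Fin n × Fin n | p.1 < p.2 ∧ Sees c p.1 p.2}.ncard := by
  obtain ⟨m, r, hm, hr, rfl⟩ : ∃ m r, n / 2 = m ∧ (n + 1) / 2 = r ∧ n = m + r :=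
    ⟨_, _, rfl, rfl, by omega⟩
  rw [hm, hr]
  refine ⟨cornerCenters m r, injective_cornerCenters m r,
    mul_le_ncard_of_castAdd_natAdd_mem fun i k =>
      ⟨Nat.lt_add_right _ i.isLt, sees_cornerCenters i k⟩⟩

/-- Bad rankings can be quadratic: for every `n ≥ 2` there are `n` unit squares
with pairwise distinct centers and a ranking of them with at least
`⌊n/2⌋ ⋅ ⌈n/2⌉` visibilities. -/
theorem stmt_13 {n : ℕ} (hn : 2 ≤ n) :
    ∃ c : Fin n → ℝ × ℝ, Function.Injective c ∧
      (n / 2) * ((n + 1) / 2) ≤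
        {p : Fin n × Fin n | p.1 < p.2 ∧ Sees c p.1 p.2}.ncard :=
  stmt_13_general
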